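/- For any isometry V from R₁ to R₂ (a matrix with V†V = 1_{R₁}) and any belief β (a density matrix on S⊗R₁), the beliefs β and (1_S⊗V) β (1_S⊗V)† (a density matrix on S⊗R₂) are equivalent. -/

import Mathlib

open Matrix
open scoped Kronecker ComplexOrder


open Classical in
/-- The positive semidefinite square root of a matrix (zero if not PSD). -/
noncomputable def msqrt {n : Type*} [Fintype n] [DecidableEq n] (A : Matrix n n ℂ) :
    Matrix n n ℂ :=
  if h : A.PosSemidef then
    (h.1.eigenvectorUnitary : Matrix n n ℂ) *
      diagonal (fun i => ((Real.sqrt (h.1.eigenvalues i) : ℝ) : ℂ)) *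
      (star h.1.eigenvectorUnitary : Matrix n n ℂ)
  else 0

/-- `A^{-1/2}`: the (nonsingular) inverse of the PSD square root. -/
noncomputable def invsqrt {n : Type*} [Fintype n] [DecidableEq n] (A : Matrix n n ℂ) :
    Matrix n n ℂ :=
  (msqrt A)⁻¹

/-- Partial trace over the second factor `R`. -/
noncomputable def ptraceR {S R : Type*} [Fintype R] (M : Matrix (S × R) (S × R) ℂ) : Matrix S S ℂ :=
  Matrix.of fun s s' => ∑ r, M (s, r) (s', r)

/-- A density matrix: positive semidefinite with unit trace. -/
def IsDensity {n : Type*} [Fintype n] (A : Matrix n n ℂ) : Prop :=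
  A.PosSemidef ∧ A.trace = 1

/-- The Choi matrix of a linear map between matrix algebras. -/
def choi {S T : Type*} [Fintype S] [DecidableEq S]
    (E : Matrix S S ℂ →ₗ[ℂ] Matrix T T ℂ) : Matrix (S × T) (S × T) ℂ :=
  Matrix.of fun p q => E (Matrix.single p.1 q.1 1) p.2 q.2

/-- Completely positive trace-preserving map. -/
def IsCPTP {S T : Type*} [Fintype S] [DecidableEq S] [Fintype T]
    (E : Matrix S S ℂ →ₗ[ℂ] Matrix T T ℂ) : Prop :=
  (∀ X, (E X).trace = X.trace) ∧ (choi E).PosSemidef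

/-- The Hilbert-Schmidt adjoint `E†`, satisfying `Tr[E(X)† Y] = Tr[X† E†(Y)]`. -/
noncomputable def adjMap {S T : Type*} [Fintype S] [DecidableEq S] [Fintype T]
    (E : Matrix S S ℂ →ₗ[ℂ] Matrix T T ℂ) (Y : Matrix T T ℂ) : Matrix S S ℂ :=
  Matrix.of fun i j => ((E (Matrix.single i j 1))ᴴ * Y).trace

/-- The original Petz map `R^{E,βS}(σ) = √βS E†(E(βS)^{-1/2} σ E(βS)^{-1/2}) √βS`. -/
noncomputable def petz {S T : Type*} [Fintype S] [DecidableEq S] [Fintype T] [DecidableEq T]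
    (E : Matrix S S ℂ →ₗ[ℂ] Matrix T T ℂ) (βS : Matrix S S ℂ) (σ : Matrix T T ℂ) :
    Matrix S S ℂ :=
  msqrt βS * adjMap E (invsqrt (E βS) * σ * invsqrt (E βS)) * msqrt βS

/-- The prior-extended Petz map `R^{E⊗Tr,β}`. -/
noncomputable def petzExt {S R T : Type*} [Fintype S] [DecidableEq S]
    [Fintype R] [DecidableEq R] [Fintype T] [DecidableEq T]
    (E : Matrix S S ℂ →ₗ[ℂ] Matrix T T ℂ) (β : Matrix (S × R) (S × R) ℂ)
    (σ : Matrix T T ℂ) : Matrix (S × R) (S × R) ℂ :=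
  msqrt β *
    (adjMap E (invsqrt (E (ptraceR β)) * σ * invsqrt (E (ptraceR β))) ⊗ₖ (1 : Matrix R R ℂ)) *
    msqrt β

/-- The retrodiction map `R_ext^{E,β} = Tr_R ∘ R^{E⊗Tr,β}`. -/
noncomputable def retroExt {S R T : Type*} [Fintype S] [DecidableEq S]
    [Fintype R] [DecidableEq R] [Fintype T] [DecidableEq T]
    (E : Matrix S S ℂ →ₗ[ℂ] Matrix T T ℂ) (β : Matrix (S × R) (S × R) ℂ)
    (σ : Matrix T T ℂ) : Matrix S S ℂ :=
  ptraceR (petzExt E β σ)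

/-- Two beliefs are equivalent if they induce the same retrodiction map for all channels. -/
def EquivBeliefs {S R₁ R₂ : Type*} [Fintype S] [DecidableEq S]
    [Fintype R₁] [DecidableEq R₁] [Fintype R₂] [DecidableEq R₂]
    (β : Matrix (S × R₁) (S × R₁) ℂ) (γ : Matrix (S × R₂) (S × R₂) ℂ) : Prop :=
  ∀ (T : Type) (_ : Fintype T) (_ : DecidableEq T)
    (E : Matrix S S ℂ →ₗ[ℂ] Matrix T T ℂ),
    IsCPTP E → (E (ptraceR β)).PosDef → (E (ptraceR γ)).PosDef →
    ∀ σ : Matrix T T ℂ, retroExt E β σ = retroExt E γ σ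


/-!
Conjugating a belief `β` by `W = 1_S ⊗ V` leaves its `S`-marginal unchanged: the partial
trace over the reference is cyclic in operators of the form `1 ⊗ B`, and `V†V = 1`.
Since `W` is an isometry, `W √β W†` is positive with square `W β W†`, so it is `√(W β W†)`.
The factor `E†(⋯) ⊗ 1` of the extended Petz map acts trivially on the reference, so
`W†(E†(⋯) ⊗ 1)W = E†(⋯) ⊗ 1`; the extended Petz map of `W β W†` is therefore the
`W`-conjugate of that of `β`, and tracing out the reference removes `W` again.
-/

section MatrixSqrt

variable {n m : Type*} [Fintype n] [DecidableEq n] [Fintype m] [DecidableEq m]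

open scoped MatrixOrder

lemma msqrt_eq_cfcSqrt {A : Matrix n n ℂ} (hA : A.PosSemidef) : msqrt A = CFC.sqrt A := by
  rw [CFC.sqrt_eq_cfc, cfc_nnreal_eq_real _ A hA.nonneg, hA.1.cfc_eq, msqrt, dif_pos hA]
  simp [IsHermitian.cfc, Function.comp_def, Real.coe_sqrt, Real.coe_toNNReal',
    max_eq_left (hA.eigenvalues_nonneg _), Unitary.conjStarAlgAut_apply]

lemma msqrt_mul_self {A : Matrix n n ℂ} (hA : A.PosSemidef) : msqrt A * msqrt A = A := by
  rw [msqrt_eq_cfcSqrt hA]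
  exact CFC.sqrt_mul_sqrt_self A hA.nonneg

lemma msqrt_eq_of_mul_self_eq {A B : Matrix n n ℂ} (hB : B.PosSemidef) (h : B * B = A) :
    msqrt A = B := by
  have hA : A.PosSemidef := by
    simpa only [hB.1.eq, h] using posSemidef_conjTranspose_mul_self B
  rw [msqrt_eq_cfcSqrt hA]
  exact CFC.sqrt_unique h hB.nonneg

lemma msqrt_conj_isometry {A : Matrix n n ℂ} (hA : A.PosSemidef) {W : Matrix m n ℂ}
    (hW : Wᴴ * W = 1) : msqrt (W * A * Wᴴ) = W * msqrt A * Wᴴ := by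
  have hpos : (msqrt A).PosSemidef := by
    rw [msqrt_eq_cfcSqrt hA]
    exact (CFC.sqrt_nonneg A).posSemidef
  refine msqrt_eq_of_mul_self_eq (hpos.mul_mul_conjTranspose_same W) ?_
  calc W * msqrt A * Wᴴ * (W * msqrt A * Wᴴ)
      = W * msqrt A * (Wᴴ * W) * msqrt A * Wᴴ := by simp only [Matrix.mul_assoc]
    _ = W * A * Wᴴ := by rw [hW, Matrix.mul_one, Matrix.mul_assoc W, msqrt_mul_self hA]

end MatrixSqrt

section LocalIsometry

variable {S R₁ R₂ : Type*} [Fintype S] [DecidableEq S] [Fintype R₂]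

lemma ptraceR_mul_one_kronecker [Fintype R₁] (X : Matrix (S × R₂) (S × R₁) ℂ)
    (B : Matrix R₁ R₂ ℂ) :
    ptraceR (X * ((1 : Matrix S S ℂ) ⊗ₖ B)) = ptraceR (((1 : Matrix S S ℂ) ⊗ₖ B) * X) := by
  ext s s'
  simp only [ptraceR, Matrix.of_apply, Matrix.mul_apply, Matrix.kroneckerMap_apply,
    Fintype.sum_prod_type, Matrix.one_apply, ite_mul, mul_ite, one_mul, zero_mul, mul_zero]
  simp only [Finset.sum_comm (γ := S), Finset.sum_ite_eq, Finset.sum_ite_eq', Finset.mem_univ,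
    if_true]
  rw [Finset.sum_comm]
  exact Finset.sum_congr rfl fun _ _ => Finset.sum_congr rfl fun _ _ => mul_comm _ _

variable [DecidableEq R₁] {V : Matrix R₂ R₁ ℂ}

lemma one_kronecker_isometry (hV : Vᴴ * V = 1) :
    ((1 : Matrix S S ℂ) ⊗ₖ V)ᴴ * ((1 : Matrix S S ℂ) ⊗ₖ V) = 1 := by
  rw [conjTranspose_kronecker, conjTranspose_one, ← mul_kronecker_mul, Matrix.one_mul, hV,
    one_kronecker_one]

lemma ptraceR_conj_one_kronecker_isometry [Fintype R₁] (hV : Vᴴ * V = 1)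
    (M : Matrix (S × R₁) (S × R₁) ℂ) :
    ptraceR (((1 : Matrix S S ℂ) ⊗ₖ V) * M * ((1 : Matrix S S ℂ) ⊗ₖ V)ᴴ) = ptraceR M := by
  rw [conjTranspose_kronecker, conjTranspose_one, ptraceR_mul_one_kronecker, ← Matrix.mul_assoc,
    ← mul_kronecker_mul, Matrix.one_mul, hV, one_kronecker_one, Matrix.one_mul]

lemma one_kronecker_isometry_conj_kronecker_one [DecidableEq R₂] (hV : Vᴴ * V = 1)
    (A : Matrix S S ℂ) :
    ((1 : Matrix S S ℂ) ⊗ₖ V)ᴴ * (A ⊗ₖ (1 : Matrix R₂ R₂ ℂ)) * ((1 : Matrix S S ℂ) ⊗ₖ V)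
      = A ⊗ₖ (1 : Matrix R₁ R₁ ℂ) := by
  rw [conjTranspose_kronecker, conjTranspose_one, ← mul_kronecker_mul, ← mul_kronecker_mul,
    Matrix.one_mul, Matrix.mul_one, Matrix.mul_one, hV]

lemma petzExt_conj_one_kronecker_isometry [Fintype R₁] [DecidableEq R₂] {T : Type*} [Fintype T]
    [DecidableEq T] (E : Matrix S S ℂ →ₗ[ℂ] Matrix T T ℂ) {β : Matrix (S × R₁) (S × R₁) ℂ}
    (hβ : β.PosSemidef) (hV : Vᴴ * V = 1) (σ : Matrix T T ℂ) :
    petzExt E (((1 : Matrix S S ℂ) ⊗ₖ V) * β * ((1 : Matrix S S ℂ) ⊗ₖ V)ᴴ) σ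
      = ((1 : Matrix S S ℂ) ⊗ₖ V) * petzExt E β σ * ((1 : Matrix S S ℂ) ⊗ₖ V)ᴴ := by
  rw [petzExt, petzExt, ptraceR_conj_one_kronecker_isometry hV,
    msqrt_conj_isometry hβ (one_kronecker_isometry hV),
    ← one_kronecker_isometry_conj_kronecker_one hV]
  simp only [Matrix.mul_assoc]

end LocalIsometry

/-- A belief is equivalent to its image under a local isometry
`V : R₁ → R₂` on the reference system. -/
theorem local_isometry_equiv
    {S R₁ R₂ : Type*} [Fintype S] [DecidableEq S]
    [Fintype R₁] [DecidableEq R₁] [Fintype R₂] [DecidableEq R₂]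
    (β : Matrix (S × R₁) (S × R₁) ℂ) (hβ : IsDensity β)
    (V : Matrix R₂ R₁ ℂ) (hV : Vᴴ * V = 1) :
    EquivBeliefs β
      (((1 : Matrix S S ℂ) ⊗ₖ V) * β * ((1 : Matrix S S ℂ) ⊗ₖ V)ᴴ) := by
  intro T _ _ E _ _ _ σ
  rw [retroExt, retroExt, petzExt_conj_one_kronecker_isometry E hβ.1 hV,
    ptraceR_conj_one_kronecker_isometry hV]
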